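/- Let t ≥ 1 and let f be a prefix-closed function with branches (L_j)_{j≥0} satisfying f ≤ M for some M ∈ [0,∞]. Then [S]ᵗ(f_t·1_{L^{≤t}∩T^{≤t}}·w_t) ≤ [S](f·w) ≤ [S]ᵗ(f_t·1_{L^{≤t}∩T^{≤t}}·w_t) + M·[S]ᵗ((1 − 1_{T^{≤t}})·w_t). -/

import Mathlib

open MeasureTheory ProbabilityTheory Filter Set
open scoped ENNReal

namespace PaperPPG

variable {Ω : Type*} [MeasurableSpace Ω]

/-- Concatenation of a finite word with an infinite sequence. -/
def cat {j : ℕ} (u : Fin j → Ω) (ω : ℕ → Ω) : ℕ → Ω :=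
  fun n => if h : n < j then u ⟨n, h⟩ else ω (n - j)

/-- Extension of a finite word by the constant `star`. -/
def extendW (star : Ω) {j : ℕ} (u : Fin j → Ω) : ℕ → Ω :=
  fun n => if h : n < j then u ⟨n, h⟩ else star

/-- First `t` letters of an infinite sequence. -/
def take (t : ℕ) (ω : ℕ → Ω) : Fin t → Ω := fun i => ω i

/-- Cylinder generated by a set of words of length `j`. -/
def cyl {j : ℕ} (B : Set (Fin j → Ω)) : Set (ℕ → Ω) := {ω | take j ω ∈ B}

/-- `u` is a prefix of `v`. -/
def IsPref {i j : ℕ} (u : Fin i → Ω) (v : Fin j → Ω) : Prop :=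
  ∃ h : i ≤ j, ∀ k : Fin i, u k = v (Fin.castLE h k)

/-- A sequence of languages, `L j ⊆ Ω^j`, is prefix-free. -/
def PrefixFree (L : (j : ℕ) → Set (Fin j → Ω)) : Prop :=
  ∀ i j : ℕ, i ≠ j → ∀ u ∈ L i, ∀ v ∈ L j, ¬ IsPref u v

/-- `L^{≤ t+1}`: words of length `t+1` having a prefix in some `L j` (necessarily `j ≤ t+1`). -/
def Lle (L : (j : ℕ) → Set (Fin j → Ω)) (t : ℕ) : Set (Fin (t + 1) → Ω) :=
  {v | ∃ j : ℕ, ∃ u ∈ L j, IsPref u v}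

/-- `L^{> t+1}`: words of length `t+1` that are prefixes of members of some `L j` with `j > t+1`. -/
def Lgt (L : (j : ℕ) → Set (Fin j → Ω)) (t : ℕ) : Set (Fin (t + 1) → Ω) :=
  {u | ∃ j : ℕ, t + 1 < j ∧ ∃ v ∈ L j, IsPref u v}

/-- `T_{n+1}`: words of length `n+1` whose letters are outside `T` except the last one, in `T`. -/
def Tword (T : Set Ω) (n : ℕ) : Set (Fin (n + 1) → Ω) :=
  {u | (∀ i : Fin (n + 1), (i : ℕ) < n → u i ∉ T) ∧ u (Fin.last n) ∈ T}

/-- `T^{≤ t+1}`: words of length `t+1` with some letter in `T`. -/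
def Tle (T : Set Ω) (t : ℕ) : Set (Fin (t + 1) → Ω) := {u | ∃ i, u i ∈ T}

/-- Infinite sequences that terminate (enter `T`) in finite time. -/
def Tf (T : Set Ω) : Set (ℕ → Ω) := {ω | ∃ j, ω j ∈ T}

/-- T-respectfulness of a sequence of languages. -/
def TRespectful (T : Set Ω) (L : (j : ℕ) → Set (Fin j → Ω)) : Prop :=
  ∀ n : ℕ, Lgt L n ∩ Tword T n = ∅

/-- Truncated weight of a word of length `t+1`. -/
noncomputable def wt (sc : Ω → ℝ≥0∞) (t : ℕ) (u : Fin (t + 1) → Ω) : ℝ≥0∞ :=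
  ∏ i, sc (u i)

/-- Weight of an infinite sequence: the limit (infimum) of the nonincreasing
sequence of partial products of the scores. -/
noncomputable def w (sc : Ω → ℝ≥0∞) (ω : ℕ → Ω) : ℝ≥0∞ :=
  ⨅ t : ℕ, ∏ i : Fin (t + 1), sc (ω i)

/-- Finite approximation `f_t` of a function on infinite sequences. -/
noncomputable def ft (star : Ω) (t : ℕ) (f : (ℕ → Ω) → ℝ≥0∞) (u : Fin (t + 1) → Ω) : ℝ≥0∞ :=
  f (extendW star u)

/-- A prefix-closed function with branches `L`. -/
structure IsPrefixClosed (T : Set Ω) (f : (ℕ → Ω) → ℝ≥0∞)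
    (L : (j : ℕ) → Set (Fin j → Ω)) : Prop where
  measF : Measurable f
  measL : ∀ j, MeasurableSet (L j)
  pf : PrefixFree L
  supp : Function.support f = ⋃ j, cyl (L j)
  const : ∀ j : ℕ, ∀ u ∈ L j, ∀ ω ω' : ℕ → Ω, f (cat u ω) = f (cat u ω')
  resp : TRespectful T L

/-- Sequences that, from the first moment (if any) they enter `T`, remain in `T` forever. -/
def Theta (T : Set Ω) : Set (ℕ → Ω) :=
  {ω | ∀ n, ω n ∉ T} ∪ ⋃ j : ℕ, {ω | (∀ n, n < j → ω n ∉ T) ∧ ∀ n, j ≤ n → ω n ∈ T}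

/-- Finite version of `Theta`, on words of length `n+1`. -/
def ThetaW (T : Set Ω) (n : ℕ) : Set (Fin (n + 1) → Ω) :=
  {u | ∀ i, u i ∉ T} ∪
    ⋃ j : ℕ, {u | j ≤ n ∧ (∀ i : Fin (n + 1), (i : ℕ) < j → u i ∉ T) ∧
      ∀ i : Fin (n + 1), j ≤ (i : ℕ) → u i ∈ T}

/-- The lifting of `h : Ω → ℝ≥0∞` (supported on `T`) to infinite sequences. -/
noncomputable def lift (T : Set Ω) (h : Ω → ℝ≥0∞) (ω : ℕ → Ω) : ℝ≥0∞ :=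
  ∑' n : ℕ, (cyl (Tword T n)).indicator 1 ω * h (ω n)

/-- The branches of the lifting of `h`: `L 0 = ∅` and `L j = (Ω∖T)^{j-1}·(T ∩ supp h)`. -/
def liftBranch (T : Set Ω) (h : Ω → ℝ≥0∞) : (j : ℕ) → Set (Fin j → Ω)
  | 0 => ∅
  | n + 1 => {u | (∀ i : Fin (n + 1), (i : ℕ) < n → u i ∉ T) ∧
      u (Fin.last n) ∈ T ∩ Function.support h}

/-- The filtering distribution at time `t+1` induced by a measure on words of
length `t+1` and the weight `wt sc t` as global potential. -/
noncomputable def filt (sc : Ω → ℝ≥0∞) (t : ℕ) (μ : Measure (Fin (t + 1) → Ω)) : Measure Ω :=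
  (∫⁻ u, wt sc t u ∂μ)⁻¹ • Measure.map (fun u => u (Fin.last t)) (μ.withDensity (wt sc t))

/-- The data of a Markov chain: an initial law `μ1`, a Markov transition kernel `κ`,
the laws `μF n` of the first `n+1` states, and the law `μI` on infinite
trajectories, uniquely determined by the Ionescu-Tulcea theorem through the
cylinder condition `proj`. -/
structure MarkovSetting (Ω : Type*) [MeasurableSpace Ω] where
  μ1 : Measure Ω
  prob1 : IsProbabilityMeasure μ1
  κ : Kernel Ω Ω
  markov : IsMarkovKernel κ
  μF : (n : ℕ) → Measure (Fin (n + 1) → Ω)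
  μI : Measure (ℕ → Ω)
  probI : IsProbabilityMeasure μI
  base : μF 0 = Measure.map (fun x => fun _ : Fin 1 => x) μ1
  step : ∀ n : ℕ, μF (n + 1) =
    Measure.map (fun p : (Fin (n + 1) → Ω) × Ω => Fin.snoc p.1 p.2)
      ((μF n) ⊗ₘ (κ.comap (fun v => v (Fin.last n)) (measurable_pi_apply _)))
  proj : ∀ n : ℕ, Measure.map (take (n + 1)) μI = μF n


section Aux

lemma measurable_take (t : ℕ) : Measurable (take (Ω := Ω) t) :=
  measurable_pi_lambda _ fun i => measurable_pi_apply _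

lemma measurable_extendW (star : Ω) (j : ℕ) :
    Measurable (fun u : Fin j → Ω => extendW star u) := by
  apply measurable_pi_lambda
  intro n
  unfold extendW
  by_cases h : n < j
  · simp only [dif_pos h]
    exact measurable_pi_apply _
  · simp only [dif_neg h]
    exact measurable_const

lemma measurable_wt {sc : Ω → ℝ≥0∞} (hsc : Measurable sc) (t : ℕ) : Measurable (wt sc t) := by
  unfold wt
  exact Finset.measurable_prod _ fun i _ => hsc.comp (measurable_pi_apply i)

lemma measurableSet_Tle {T : Set Ω} (hT : MeasurableSet T) (t : ℕ) :
    MeasurableSet (Tle T t) := by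
  have h : Tle T t = ⋃ i : Fin (t + 1), (fun u : Fin (t + 1) → Ω => u i) ⁻¹' T := by
    ext u; simp [Tle]
  rw [h]
  exact MeasurableSet.iUnion fun i => (measurable_pi_apply i) hT

lemma measurableSet_Lle {L : (j : ℕ) → Set (Fin j → Ω)} (hL : ∀ j, MeasurableSet (L j))
    (t : ℕ) : MeasurableSet (Lle L t) := by
  have h : Lle L t = ⋃ j, ⋃ (hj : j ≤ t + 1),
      (fun (v : Fin (t + 1) → Ω) (k : Fin j) => v (Fin.castLE hj k)) ⁻¹' L j := by
    ext v
    constructor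
    · rintro ⟨j, u, hu, hle, heq⟩
      refine mem_iUnion.2 ⟨j, mem_iUnion.2 ⟨hle, ?_⟩⟩
      have he : (fun k : Fin j => v (Fin.castLE hle k)) = u := funext fun k => (heq k).symm
      show (fun k : Fin j => v (Fin.castLE hle k)) ∈ L j
      rw [he]; exact hu
    · intro hv
      obtain ⟨j, hj⟩ := mem_iUnion.1 hv
      obtain ⟨hle, hmem⟩ := mem_iUnion.1 hj
      exact ⟨j, _, hmem, hle, fun k => rfl⟩
  rw [h]
  exact MeasurableSet.iUnion fun j => MeasurableSet.iUnion fun hj =>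
    (measurable_pi_lambda _ fun k => measurable_pi_apply _) (hL j)

lemma w_le_partial (sc : Ω → ℝ≥0∞) (ω : ℕ → Ω) (t : ℕ) :
    w sc ω ≤ ∏ i : Fin (t + 1), sc (ω i) := iInf_le _ t

lemma w_eq_partial {sc : Ω → ℝ≥0∞} (hsc1 : ∀ x, sc x ≤ 1) (ω : ℕ → Ω) (t : ℕ)
    (h : ∀ m, t + 1 ≤ m → sc (ω m) = 1) :
    w sc ω = ∏ i : Fin (t + 1), sc (ω i) := by
  refine le_antisymm (iInf_le _ t) (le_iInf fun s => ?_)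
  rw [Fin.prod_univ_eq_prod_range (fun i => sc (ω i)) (t + 1),
    Fin.prod_univ_eq_prod_range (fun i => sc (ω i)) (s + 1)]
  rcases le_or_gt s t with hs | hs
  · have he : (∏ i ∈ Finset.range (s + 1), sc (ω i)) *
        ∏ i ∈ Finset.Ico (s + 1) (t + 1), sc (ω i)
        = ∏ i ∈ Finset.range (t + 1), sc (ω i) :=
      Finset.prod_range_mul_prod_Ico _ (by omega)
    calc ∏ i ∈ Finset.range (t + 1), sc (ω i)
        = (∏ i ∈ Finset.range (s + 1), sc (ω i)) *
            ∏ i ∈ Finset.Ico (s + 1) (t + 1), sc (ω i) := he.symm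
      _ ≤ (∏ i ∈ Finset.range (s + 1), sc (ω i)) * 1 :=
          mul_le_mul_right (Finset.prod_le_one (fun i _ => zero_le) fun i _ => hsc1 _) _
      _ = ∏ i ∈ Finset.range (s + 1), sc (ω i) := mul_one _
  · have he : (∏ i ∈ Finset.range (t + 1), sc (ω i)) *
        ∏ i ∈ Finset.Ico (t + 1) (s + 1), sc (ω i)
        = ∏ i ∈ Finset.range (s + 1), sc (ω i) :=
      Finset.prod_range_mul_prod_Ico _ (by omega)
    have hone : ∏ i ∈ Finset.Ico (t + 1) (s + 1), sc (ω i) = 1 :=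
      Finset.prod_eq_one fun i hi => h i (Finset.mem_Ico.1 hi).1
    rw [← he, hone, mul_one]

lemma snoc_measurable (n : ℕ) :
    Measurable (fun p : (Fin (n + 1) → Ω) × Ω => (Fin.snoc p.1 p.2 : Fin (n + 2) → Ω)) := by
  apply measurable_pi_lambda
  intro i
  induction i using Fin.lastCases with
  | last => simpa only [Fin.snoc_last] using measurable_snd
  | cast k => simp only [Fin.snoc_castSucc]; exact (measurable_pi_apply k).comp measurable_fst

lemma bad_null (M : MarkovSetting Ω) {T : Set Ω} (hT : MeasurableSet T)
    (hκT : ∀ ω ∈ T, M.κ ω = Measure.dirac ω) (n : ℕ) :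
    M.μI {ω | ω n ∈ T ∧ ω (n + 1) ∉ T} = 0 := by
  haveI := M.probI
  haveI := M.markov
  haveI : IsProbabilityMeasure (M.μF n) := by
    rw [← M.proj n]
    exact Measure.isProbabilityMeasure_map (measurable_take (n + 1)).aemeasurable
  set S : Set (Fin (n + 2) → Ω) :=
    ((fun v : Fin (n + 2) → Ω => v ⟨n, by omega⟩) ⁻¹' T) ∩
      ((fun v : Fin (n + 2) → Ω => v (Fin.last (n + 1))) ⁻¹' Tᶜ) with hSdef
  have hSm : MeasurableSet S :=
    ((measurable_pi_apply _) hT).inter ((measurable_pi_apply _) hT.compl)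
  have h1 : {ω : ℕ → Ω | ω n ∈ T ∧ ω (n + 1) ∉ T} = take (n + 2) ⁻¹' S := rfl
  rw [h1, ← Measure.map_apply (measurable_take (n + 2)) hSm, M.proj (n + 1), M.step n,
      Measure.map_apply (snoc_measurable n) hSm]
  have h2 : (fun p : (Fin (n + 1) → Ω) × Ω => (Fin.snoc p.1 p.2 : Fin (n + 2) → Ω)) ⁻¹' S
      = ((fun u : Fin (n + 1) → Ω => u (Fin.last n)) ⁻¹' T) ×ˢ Tᶜ := by
    ext ⟨u, x⟩
    have e1 : (Fin.snoc u x : Fin (n + 2) → Ω) ⟨n, by omega⟩ = u (Fin.last n) := by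
      have hh : (⟨n, by omega⟩ : Fin (n + 2)) = Fin.castSucc (Fin.last n) := rfl
      rw [hh, Fin.snoc_castSucc]
    have e2 : (Fin.snoc u x : Fin (n + 2) → Ω) (Fin.last (n + 1)) = x := Fin.snoc_last _ _
    simp [hSdef, e1, e2]
  rw [h2, Measure.compProd_apply (((measurable_pi_apply _) hT).prod hT.compl)]
  have h3 : ∀ u : Fin (n + 1) → Ω,
      (M.κ.comap (fun v : Fin (n + 1) → Ω => v (Fin.last n)) (measurable_pi_apply _)) u
        (Prod.mk u ⁻¹' ((((fun u : Fin (n + 1) → Ω => u (Fin.last n)) ⁻¹' T)) ×ˢ Tᶜ)) = 0 := by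
    intro u
    rw [Kernel.comap_apply]
    by_cases hu : u (Fin.last n) ∈ T
    · have hp : Prod.mk u ⁻¹' ((((fun u : Fin (n + 1) → Ω => u (Fin.last n)) ⁻¹' T)) ×ˢ Tᶜ) = Tᶜ := by
        ext x; simp [hu]
      rw [hp, hκT _ hu, Measure.dirac_apply' _ hT.compl]
      simp [hu]
    · have hp : Prod.mk u ⁻¹' ((((fun u : Fin (n + 1) → Ω => u (Fin.last n)) ⁻¹' T)) ×ˢ Tᶜ) = ∅ := by
        ext x; simp [hu]
      simp [hp]
  simp only [h3, lintegral_zero]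

lemma theta_ae (M : MarkovSetting Ω) {T : Set Ω} (hT : MeasurableSet T)
    (hκT : ∀ ω ∈ T, M.κ ω = Measure.dirac ω) :
    ∀ᵐ ω ∂M.μI, ω ∈ Theta T := by
  classical
  have hsub : (Theta T)ᶜ ⊆ ⋃ n, {ω : ℕ → Ω | ω n ∈ T ∧ ω (n + 1) ∉ T} := by
    intro ω hω
    by_contra hc
    simp only [mem_iUnion, mem_setOf_eq, not_exists, not_and, not_not] at hc
    apply hω
    by_cases he : ∃ n, ω n ∈ T
    · right
      refine mem_iUnion.2 ⟨Nat.find he, fun n hn => Nat.find_min he hn, ?_⟩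
      intro n hn
      induction n, hn using Nat.le_induction with
      | base => exact Nat.find_spec he
      | succ m hm ih => exact hc m ih
    · left
      push_neg at he
      exact he
  rw [ae_iff]
  exact measure_mono_null hsub (measure_iUnion_null fun n => bad_null M hT hκT n)

lemma f_eq_ft {T : Set Ω} {f : (ℕ → Ω) → ℝ≥0∞} {L : (j : ℕ) → Set (Fin j → Ω)}
    (hf : IsPrefixClosed T f L) (star : Ω) (t : ℕ) (ω : ℕ → Ω)
    (h : take (t + 1) ω ∈ Lle L t) : f ω = ft star t f (take (t + 1) ω) := by
  obtain ⟨j, u, hu, hle, heq⟩ := h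
  have h1 : ω = cat u (fun n => ω (n + j)) := by
    funext n
    unfold cat
    by_cases hn : n < j
    · simp only [dif_pos hn]
      exact (heq ⟨n, hn⟩).symm
    · simp only [dif_neg hn, Nat.sub_add_cancel (le_of_not_gt hn)]
  have h2 : extendW star (take (t + 1) ω)
      = cat u (fun n => extendW star (take (t + 1) ω) (n + j)) := by
    funext n
    unfold cat
    by_cases hn : n < j
    · simp only [dif_pos hn]
      have hnt : n < t + 1 := lt_of_lt_of_le hn hle
      show extendW star (take (t + 1) ω) n = u ⟨n, hn⟩
      unfold extendW
      simp only [dif_pos hnt]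
      exact (heq ⟨n, hn⟩).symm
    · simp only [dif_neg hn, Nat.sub_add_cancel (le_of_not_gt hn)]
  calc f ω = f (cat u (fun n => ω (n + j))) := by rw [← h1]
    _ = f (cat u (fun n => extendW star (take (t + 1) ω) (n + j))) := hf.const j u hu _ _
    _ = f (extendW star (take (t + 1) ω)) := by rw [← h2]

lemma f_zero {T : Set Ω} {f : (ℕ → Ω) → ℝ≥0∞} {L : (j : ℕ) → Set (Fin j → Ω)}
    (hf : IsPrefixClosed T f L) (t : ℕ) (ω : ℕ → Ω)
    (hTm : take (t + 1) ω ∈ Tle T t) (hL : take (t + 1) ω ∉ Lle L t) : f ω = 0 := by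
  classical
  by_contra hne
  have hsupp : ω ∈ ⋃ j, cyl (L j) := hf.supp ▸ (Function.mem_support.2 hne)
  obtain ⟨j, hj⟩ := mem_iUnion.1 hsupp
  rcases le_or_gt j (t + 1) with hle | hgt
  · exact hL ⟨j, take j ω, hj, hle, fun k => rfl⟩
  · obtain ⟨i0, hi0⟩ := hTm
    have he : ∃ n, ω n ∈ T := ⟨i0, hi0⟩
    have hkT : ω (Nat.find he) ∈ T := Nat.find_spec he
    have hkle : Nat.find he ≤ t := le_trans (Nat.find_le hi0) (Fin.is_le i0)
    have hmem : take (Nat.find he + 1) ω ∈ Lgt L (Nat.find he) ∩ Tword T (Nat.find he) := by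
      constructor
      · exact ⟨j, by omega, take j ω, hj, ⟨by omega, fun i => rfl⟩⟩
      · exact ⟨fun i hi => Nat.find_min he hi, hkT⟩
    have hre := hf.resp (Nat.find he)
    rw [Set.eq_empty_iff_forall_notMem] at hre
    exact hre _ hmem

end Aux

/-- **Basic finite-approximation bounds** for a prefix-closed function. -/
theorem basic_bounds
    (M : MarkovSetting Ω) (T : Set Ω) (hT : MeasurableSet T)
    (hκT : ∀ ω ∈ T, M.κ ω = Measure.dirac ω)
    (sc : Ω → ℝ≥0∞) (hsc : Measurable sc) (hsc1 : ∀ x, sc x ≤ 1)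
    (hscT : ∀ ω ∈ T, sc ω = 1) (star : Ω) (t : ℕ)
    (f : (ℕ → Ω) → ℝ≥0∞) (L : (j : ℕ) → Set (Fin j → Ω))
    (hf : IsPrefixClosed T f L)
    (Mb : ℝ≥0∞) (hfM : ∀ ω, f ω ≤ Mb) :
    ∫⁻ u, ft star t f u * ((Lle L t ∩ Tle T t).indicator 1 u) * wt sc t u ∂(M.μF t) ≤
      ∫⁻ ω, f ω * w sc ω ∂M.μI ∧
    ∫⁻ ω, f ω * w sc ω ∂M.μI ≤
      (∫⁻ u, ft star t f u * ((Lle L t ∩ Tle T t).indicator 1 u) * wt sc t u ∂(M.μF t)) +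
        Mb * ∫⁻ u, (1 - (Tle T t).indicator 1 u) * wt sc t u ∂(M.μF t) := by
  classical
  set G : (Fin (t + 1) → Ω) → ℝ≥0∞ :=
    fun u => ft star t f u * ((Lle L t ∩ Tle T t).indicator 1 u) * wt sc t u with hG
  set W : (Fin (t + 1) → Ω) → ℝ≥0∞ :=
    fun u => (1 - (Tle T t).indicator 1 u) * wt sc t u with hW
  have hGmeas : Measurable G := by
    refine Measurable.mul (Measurable.mul ?_ ?_) (measurable_wt hsc t)
    · exact hf.measF.comp (measurable_extendW star (t + 1))
    · exact measurable_const.indicator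
        ((measurableSet_Lle hf.measL t).inter (measurableSet_Tle hT t))
  have hWmeas : Measurable W := by
    refine Measurable.mul ?_ (measurable_wt hsc t)
    exact measurable_const.sub (measurable_const.indicator (measurableSet_Tle hT t))
  have hmapG : ∫⁻ u, G u ∂(M.μF t) = ∫⁻ ω, G (take (t + 1) ω) ∂M.μI := by
    rw [← M.proj t, lintegral_map hGmeas (measurable_take (t + 1))]
  have hmapW : ∫⁻ u, W u ∂(M.μF t) = ∫⁻ ω, W (take (t + 1) ω) ∂M.μI := by
    rw [← M.proj t, lintegral_map hWmeas (measurable_take (t + 1))]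
  have hae := theta_ae M hT hκT
  have key : ∀ ω ∈ Theta T, G (take (t + 1) ω) ≤ f ω * w sc ω ∧
      f ω * w sc ω ≤ G (take (t + 1) ω) + Mb * W (take (t + 1) ω) := by
    intro ω hω
    by_cases htle : take (t + 1) ω ∈ Tle T t
    · obtain ⟨i0, hi0⟩ := htle
      have habs : ∀ m, t + 1 ≤ m → ω m ∈ T := by
        rcases hω with h1 | h2
        · exact absurd hi0 (h1 i0)
        · obtain ⟨j, hj1, hj2⟩ := mem_iUnion.1 h2
          have hji : j ≤ (i0 : ℕ) := by
            by_contra hcc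
            exact hj1 (i0 : ℕ) (lt_of_not_ge hcc) hi0
          intro m hm
          exact hj2 m (by have := Fin.is_le i0; omega)
      have hw : w sc ω = wt sc t (take (t + 1) ω) :=
        w_eq_partial hsc1 ω t fun m hm => hscT _ (habs m hm)
      have htle' : take (t + 1) ω ∈ Tle T t := ⟨i0, hi0⟩
      have hWz : W (take (t + 1) ω) = 0 := by
        rw [hW]
        simp [Set.indicator_of_mem htle']
      by_cases hlle : take (t + 1) ω ∈ Lle L t
      · have hfe := f_eq_ft hf star t ω hlle
        have hind : (Lle L t ∩ Tle T t).indicator (1 : (Fin (t + 1) → Ω) → ℝ≥0∞)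
            (take (t + 1) ω) = 1 := Set.indicator_of_mem (Set.mem_inter hlle htle') 1
        have hGe : G (take (t + 1) ω) = f ω * w sc ω := by
          rw [hG]
          simp only [hind, mul_one]
          rw [← hfe, hw]
        exact ⟨le_of_eq hGe, by rw [hGe, hWz, mul_zero, add_zero]⟩
      · have hfz : f ω = 0 := f_zero hf t ω htle' hlle
        have hind : (Lle L t ∩ Tle T t).indicator (1 : (Fin (t + 1) → Ω) → ℝ≥0∞)
            (take (t + 1) ω) = 0 := Set.indicator_of_notMem (fun hc => hlle hc.1) 1
        constructor
        · rw [hG]; simp [hind, hfz]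
        · simp [hfz]
    · have hind : (Tle T t).indicator (1 : (Fin (t + 1) → Ω) → ℝ≥0∞) (take (t + 1) ω) = 0 :=
        Set.indicator_of_notMem htle 1
      have hindL : (Lle L t ∩ Tle T t).indicator (1 : (Fin (t + 1) → Ω) → ℝ≥0∞)
          (take (t + 1) ω) = 0 := Set.indicator_of_notMem (fun hc => htle hc.2) 1
      constructor
      · rw [hG]; simp [hindL]
      · have h1 : f ω * w sc ω ≤ Mb * wt sc t (take (t + 1) ω) :=
          mul_le_mul' (hfM ω) (w_le_partial sc ω t)
        calc f ω * w sc ω ≤ Mb * wt sc t (take (t + 1) ω) := h1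
          _ = G (take (t + 1) ω) + Mb * W (take (t + 1) ω) := by
              rw [hG, hW]; simp [hindL, hind]
  constructor
  · rw [hmapG]
    refine lintegral_mono_ae ?_
    filter_upwards [hae] with ω hω using (key ω hω).1
  · have hWc : Measurable fun ω : ℕ → Ω => W (take (t + 1) ω) :=
      hWmeas.comp (measurable_take (t + 1))
    have hGc : Measurable fun ω : ℕ → Ω => G (take (t + 1) ω) :=
      hGmeas.comp (measurable_take (t + 1))
    have hconst : Mb * ∫⁻ u, W u ∂(M.μF t) = ∫⁻ ω, Mb * W (take (t + 1) ω) ∂M.μI := by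
      rw [hmapW, ← lintegral_const_mul Mb hWc]
    rw [hmapG, hconst, ← lintegral_add_left hGc]
    refine lintegral_mono_ae ?_
    filter_upwards [hae] with ω hω using (key ω hω).2


end PaperPPG
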